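/- arXiv:1504.07973 — 5 statements merged into one kernel-verified Lean document; each statement's English description precedes it below -/
import Mathlib

section
/- Let d ∈ ℂ with d_i = Im(d) ≠ 0 and let 1/μ = −1 − √(1+d) (principal square root). Define K = −1 + d·conj(d)·μ/(conj(d) − d), L = −dμ/(conj(d) − d), M = μ/(conj(d) − d), and Q(x,y) = ½(Kx² + 2Lxy + My²). Then for all (x,y) ∈ ℝ², 2·Re Q(x,y) = −(μ_i/(2d_i))·(y + x/|μ|²)², where μ_i = Im(μ). -/
open Complex

set_option maxHeartbeats 1600000 in
/-- With `1/μ = −1 − √(1+d)` (principal branch), `d_i ≠ 0`, and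
`K = −1 + d conj(d) μ/(conj(d)−d)`, `L = −dμ/(conj(d)−d)`, `M = μ/(conj(d)−d)`,
the quadratic form `Q(x,y) = ½(Kx² + 2Lxy + My²)` satisfies
`2 Re Q(x,y) = −(μ_i/(2d_i)) (y + x/|μ|²)²` for all real `x, y`. -/
theorem stmt_5 (d μ K L M : ℂ) (hd : d.im ≠ 0)
    (hbranch : ∀ r : ℝ, r ≤ 0 → 1 + d ≠ (r : ℂ)) (hμ : μ ≠ 0)
    (hμdef : μ⁻¹ = -1 - (1 + d) ^ ((1 : ℂ) / 2))
    (hK : K = -1 + d * (starRingEnd ℂ) d * μ / ((starRingEnd ℂ) d - d))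
    (hL : L = -(d * μ) / ((starRingEnd ℂ) d - d))
    (hM : M = μ / ((starRingEnd ℂ) d - d))
    (Q : ℝ → ℝ → ℂ)
    (hQ : ∀ x y : ℝ, Q x y =
      (K * (x : ℂ) ^ 2 + 2 * L * (x : ℂ) * (y : ℂ) + M * (y : ℂ) ^ 2) / 2) :
    ∀ x y : ℝ, 2 * (Q x y).re = -(μ.im / (2 * d.im)) * (y + x / Complex.normSq μ) ^ 2 := by
  have h1d : (1 : ℂ) + d ≠ 0 := by
    intro h
    apply hd
    have := congrArg Complex.im h
    simpa using this
  have hs : (1 + d) ^ ((1:ℂ)/2) * (1 + d) ^ ((1:ℂ)/2) = 1 + d := by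
    rw [← Complex.cpow_add _ _ h1d]
    norm_num
  have hsq : (1:ℂ) + d = (-1 - μ⁻¹) * (-1 - μ⁻¹) := by
    have h : (-1 - μ⁻¹ : ℂ) = (1 + d) ^ ((1:ℂ)/2) := by rw [hμdef]; ring
    rw [h, hs]
  have key : d * μ ^ 2 = 1 + 2 * μ := by
    field_simp at hsq
    linear_combination hsq
  have hν : (starRingEnd ℂ) μ ≠ 0 := by simpa using hμ
  have keyc : (starRingEnd ℂ) d * ((starRingEnd ℂ) μ) ^ 2 = 1 + 2 * (starRingEnd ℂ) μ := by
    have := congrArg (starRingEnd ℂ) key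
    simpa [map_mul, map_pow, map_add, map_ofNat] using this
  set ν := (starRingEnd ℂ) μ with hνdef
  set e := (starRingEnd ℂ) d with hedef
  have hdval : d = (1 + 2 * μ) / μ ^ 2 := by
    rw [eq_div_iff (pow_ne_zero 2 hμ)]; exact key
  have heval : e = (1 + 2 * ν) / ν ^ 2 := by
    rw [eq_div_iff (pow_ne_zero 2 hν)]; exact keyc
  have hde : d - e ≠ 0 := by
    intro h
    apply hd
    have h2 := congrArg Complex.im h
    simp [hedef, Complex.sub_im, Complex.conj_im] at h2
    linarith
  have hμν : μ - ν ≠ 0 := by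
    intro h
    apply hde
    have hν' : ν = μ := by linear_combination -h
    rw [hdval, heval, hν', sub_self]
  set w : ℂ := μ + ν + 2 * μ * ν with hwdef
  have hediff : e - d = (μ - ν) * w / (μ ^ 2 * ν ^ 2) := by
    rw [hdval, heval]
    field_simp
    try ring
  have hw : w ≠ 0 := by
    intro h
    apply hde
    have h2 : e - d = 0 := by rw [hediff, h]; simp
    linear_combination -h2
  have hνν : (starRingEnd ℂ) ν = μ := by rw [hνdef]; exact Complex.conj_conj μ
  have hcw : (starRingEnd ℂ) w = w := by
    rw [hwdef]
    simp only [map_add, map_mul, map_ofNat, hνν, ← hνdef]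
    ring
  have hKval : K = -1 + (1 + 2 * μ) * (1 + 2 * ν) * μ / ((μ - ν) * w) := by
    rw [hK, hediff, hdval, heval]
    field_simp
    try ring
  have hLval : L = -((1 + 2 * μ) * μ * ν ^ 2) / ((μ - ν) * w) := by
    rw [hL, hediff, hdval]
    field_simp
    try ring
  have hMval : M = μ ^ 3 * ν ^ 2 / ((μ - ν) * w) := by
    rw [hM, hediff]
    field_simp
    try ring
  have hcK : (starRingEnd ℂ) K = -1 + (1 + 2 * ν) * (1 + 2 * μ) * ν / ((ν - μ) * w) := by
    rw [hKval]
    simp only [map_add, map_sub, map_neg, map_mul, map_div₀, map_one, map_ofNat, hνν, ← hνdef, hcw]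
  have hcL : (starRingEnd ℂ) L = -((1 + 2 * ν) * ν * μ ^ 2) / ((ν - μ) * w) := by
    rw [hLval]
    simp only [map_add, map_sub, map_neg, map_mul, map_div₀, map_one, map_ofNat, map_pow, hνν, ← hνdef, hcw]
  have hcM : (starRingEnd ℂ) M = ν ^ 3 * μ ^ 2 / ((ν - μ) * w) := by
    rw [hMval]
    simp only [map_sub, map_mul, map_div₀, map_pow, hνν, ← hνdef, hcw]
  have hνμ : ν - μ ≠ 0 := fun h => hμν (by linear_combination -h)
  have hdimC : (d.im : ℂ) ≠ 0 := by exact_mod_cast hd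
  have hratio : ((μ.im : ℝ) : ℂ) / (2 * ((d.im : ℝ) : ℂ)) = -(μ ^ 2 * ν ^ 2) / (2 * w) := by
    have hμi : ((μ.im : ℝ) : ℂ) = (μ - ν) / (2 * Complex.I) := by
      rw [hνdef, Complex.sub_conj]
      push_cast
      field_simp
    have hdi : ((d.im : ℝ) : ℂ) = (d - e) / (2 * Complex.I) := by
      rw [hedef, Complex.sub_conj]
      push_cast
      field_simp
    rw [hμi, hdi, show d - e = -((μ - ν) * w / (μ ^ 2 * ν ^ 2)) from by linear_combination -hediff]
    field_simp
    try ring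
  intro x y
  apply Complex.ofReal_injective
  rw [show ((-(μ.im / (2 * d.im)) * (y + x / Complex.normSq μ) ^ 2 : ℝ) : ℂ)
      = -(((μ.im : ℝ) : ℂ) / (2 * ((d.im : ℝ) : ℂ))) * ((y:ℂ) + (x:ℂ) / ((Complex.normSq μ : ℝ) : ℂ)) ^ 2 from by
        push_cast; ring]
  rw [show ((2 * (Q x y).re : ℝ) : ℂ) = Q x y + (starRingEnd ℂ) (Q x y) from (Complex.add_conj _).symm]
  rw [hratio, show ((Complex.normSq μ : ℝ) : ℂ) = μ * ν from by rw [hνdef, Complex.mul_conj]]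
  rw [hQ x y]
  simp only [map_add, map_mul, map_div₀, map_pow, map_ofNat, Complex.conj_ofReal]
  rw [hcK, hcL, hcM, hKval, hLval, hMval]
  field_simp
  ring
end

section
/- With 1/μ = −1 − √(1+d) and d_i = Im(d) ≠ 0, the quantities d_i and Im(1/μ) have opposite signs, and consequently Re Q(x,y) ≤ 0 for all (x,y) ∈ ℝ², where Q is the quadratic form Q(x,y) = ½(Kx² + 2Lxy + My²) with K, L, M determined by K = −1 + d·conj(d)·μ/(conj(d) − d), L = −dμ/(conj(d) − d), M = μ/(conj(d) − d). -/
/-!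
Write `s = √(1+d) = a + bi`. Since `Im d ≠ 0`, `1 + d` lies off the branch cut, so `a > 0`;
from `s² = 1 + d` we get `Im d = 2ab`, while `Im(1/μ) = -b`, whence the opposite signs.
As `conj d - d = -2i Im d` is purely imaginary, `Re (w / (conj d - d)) = -Im w / (2 Im d)`.
With `μ = -1/(1+s)`, `dμ = 1 - s` and `N = |1+s|²` this gives
`Re K = -N/(4a)`, `Re L = -1/(4a)`, `Re M = -1/(4aN)`, so `Re Q(x,y) = -(Nx + y)²/(8aN) ≤ 0`.
-/

open Complex ComplexConjugate

namespace Complex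

lemma cpow_one_half_sq (z : ℂ) : (z ^ (1 / 2 : ℂ)) ^ 2 = z := by
  simp [cpow_ofNat_inv_pow]

lemma re_cpow_one_half_pos {z : ℂ} (hz : z ∈ slitPlane) : 0 < (z ^ (1 / 2 : ℂ)).re := by
  have harg : |z.arg| < Real.pi :=
    abs_lt.2 ⟨neg_pi_lt_arg z, (arg_le_pi z).lt_of_ne (slitPlane_arg_ne_pi hz)⟩
  rw [cpow_def_of_ne_zero (slitPlane_ne_zero hz), exp_re]
  refine mul_pos (Real.exp_pos _) (Real.cos_pos_of_mem_Ioo ?_)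
  have him : (log z * (1 / 2)).im = z.arg / 2 := by simp [log_im, div_eq_mul_inv]
  rw [him]
  constructor <;> linarith [abs_lt.1 harg]

lemma re_div_conj_sub_self (w d : ℂ) : (w / (conj d - d)).re = -w.im / (2 * d.im) := by
  rw [← neg_sub, sub_conj, div_neg, neg_re, div_re]
  by_cases h : d.im = 0
  · simp [h]
  · simp [normSq_apply]
    field_simp

lemma re_quadratic_form_ofReal (K L M : ℂ) (x y : ℝ) :
    ((K * x ^ 2 + 2 * L * x * y + M * y ^ 2) / 2).re =
      (K.re * x ^ 2 + 2 * L.re * x * y + M.re * y ^ 2) / 2 := by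
  simp [← ofReal_pow]

end Complex

section SquareRootParametrization

variable {s d μ : ℂ}

lemma one_add_ne_zero_of_re_pos (hs : 0 < s.re) : 1 + s ≠ 0 :=
  ne_of_apply_ne re (by simp; linarith)

lemma im_eq_of_sq_eq_one_add (hsd : s ^ 2 = 1 + d) : d.im = 2 * s.re * s.im := by
  have := congrArg im hsd
  simp [sq] at this
  linarith

lemma eq_neg_inv_of_inv_eq (hsμ : μ⁻¹ = -1 - s) : μ = -(1 + s)⁻¹ := by
  rw [← inv_inv μ, hsμ, ← neg_add', inv_neg]

lemma im_of_inv_eq (hsμ : μ⁻¹ = -1 - s) : μ.im = s.im / normSq (1 + s) := by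
  simp [eq_neg_inv_of_inv_eq hsμ, inv_im, neg_div]

lemma mul_eq_one_sub (hsd : s ^ 2 = 1 + d) (hsμ : μ⁻¹ = -1 - s) (hs : 1 + s ≠ 0) :
    d * μ = 1 - s := by
  rw [eq_neg_inv_of_inv_eq hsμ, show d = (s - 1) * (1 + s) by linear_combination -hsd]
  field_simp
  ring

lemma im_mul_im_inv_neg (hsd : s ^ 2 = 1 + d) (hsμ : μ⁻¹ = -1 - s) (hs : 0 < s.re)
    (hd : d.im ≠ 0) : d.im * (μ⁻¹).im < 0 := by
  rw [im_eq_of_sq_eq_one_add hsd] at hd ⊢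
  have hb : 0 < s.re * s.im ^ 2 := by positivity [right_ne_zero_of_mul hd]
  rw [hsμ]
  simp only [sub_im, neg_im, one_im]
  linear_combination 2 * hb

lemma re_div_conj_sub_self_of_inv_eq (hsd : s ^ 2 = 1 + d) (hsμ : μ⁻¹ = -1 - s)
    (hb : s.im ≠ 0) : (μ / (conj d - d)).re = -1 / (4 * s.re * normSq (1 + s)) := by
  rw [re_div_conj_sub_self, im_of_inv_eq hsμ, im_eq_of_sq_eq_one_add hsd]
  field_simp
  ring

lemma re_neg_mul_div_conj_sub_self_of_inv_eq (hsd : s ^ 2 = 1 + d) (hsμ : μ⁻¹ = -1 - s)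
    (hs : 0 < s.re) (hb : s.im ≠ 0) : (-(d * μ) / (conj d - d)).re = -1 / (4 * s.re) := by
  rw [re_div_conj_sub_self, mul_eq_one_sub hsd hsμ (one_add_ne_zero_of_re_pos hs),
    im_eq_of_sq_eq_one_add hsd]
  simp only [neg_im, sub_im, one_im]
  field_simp
  ring

lemma re_neg_one_add_mul_conj_mul_div_conj_sub_self_of_inv_eq (hsd : s ^ 2 = 1 + d)
    (hsμ : μ⁻¹ = -1 - s) (hs : 0 < s.re) (hb : s.im ≠ 0) :
    (-1 + d * conj d * μ / (conj d - d)).re = -normSq (1 + s) / (4 * s.re) := by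
  have hnormSq : normSq d = normSq (s - 1) * normSq (1 + s) := by
    rw [← map_mul, show d = (s - 1) * (1 + s) by linear_combination -hsd]
  have hN : normSq (1 + s) ≠ 0 := (normSq_pos.2 (one_add_ne_zero_of_re_pos hs)).ne'
  have hdiff : normSq (1 + s) - normSq (s - 1) = 4 * s.re := by
    simp only [normSq_apply, add_re, add_im, sub_re, sub_im, one_re, one_im]
    ring
  rw [add_re, re_div_conj_sub_self, mul_conj, im_ofReal_mul, hnormSq, im_of_inv_eq hsμ,
    im_eq_of_sq_eq_one_add hsd, neg_re, one_re]
  field_simp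
  linear_combination 4 * hdiff

end SquareRootParametrization

theorem stmt_6_general (d μ K L M : ℂ) (hd : d.im ≠ 0)
    (hμdef : μ⁻¹ = -1 - (1 + d) ^ ((1 : ℂ) / 2))
    (hK : K = -1 + d * (starRingEnd ℂ) d * μ / ((starRingEnd ℂ) d - d))
    (hL : L = -(d * μ) / ((starRingEnd ℂ) d - d))
    (hM : M = μ / ((starRingEnd ℂ) d - d))
    (Q : ℝ → ℝ → ℂ)
    (hQ : ∀ x y : ℝ, Q x y =
      (K * (x : ℂ) ^ 2 + 2 * L * (x : ℂ) * (y : ℂ) + M * (y : ℂ) ^ 2) / 2) :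
    ((0 < d.im → (μ⁻¹).im < 0) ∧ (d.im < 0 → 0 < (μ⁻¹).im)) ∧
    ∀ x y : ℝ, (Q x y).re ≤ 0 := by
  set s := (1 + d) ^ ((1 : ℂ) / 2)
  have hsd : s ^ 2 = 1 + d := cpow_one_half_sq _
  have hs : 0 < s.re := re_cpow_one_half_pos (mem_slitPlane_iff.2 (Or.inr (by simpa using hd)))
  have hb : s.im ≠ 0 := right_ne_zero_of_mul (im_eq_of_sq_eq_one_add hsd ▸ hd)
  have hsign := im_mul_im_inv_neg hsd hμdef hs hd
  refine ⟨⟨fun h => neg_of_mul_neg_right hsign h.le, fun h => pos_of_mul_neg_right hsign h.le⟩,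
    fun x y => ?_⟩
  have hN : 0 < normSq (1 + s) := normSq_pos.2 (one_add_ne_zero_of_re_pos hs)
  have hre : (Q x y).re = -(normSq (1 + s) * x + y) ^ 2 / (8 * s.re * normSq (1 + s)) := by
    rw [hQ, re_quadratic_form_ofReal, hK, hL, hM,
      re_neg_one_add_mul_conj_mul_div_conj_sub_self_of_inv_eq hsd hμdef hs hb,
      re_neg_mul_div_conj_sub_self_of_inv_eq hsd hμdef hs hb,
      re_div_conj_sub_self_of_inv_eq hsd hμdef hb]
    field_simp
    ring
  rw [hre]
  exact div_nonpos_of_nonpos_of_nonneg (neg_nonpos.2 (sq_nonneg _)) (by positivity)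

/-- With `1/μ = −1 − √(1+d)` and `d_i ≠ 0`, the quantities `d_i` and `Im(1/μ)` have
opposite signs, and consequently `Re Q(x,y) ≤ 0` for all `(x,y) ∈ ℝ²`, where
`Q(x,y) = ½(Kx² + 2Lxy + My²)` with the stated `K, L, M`. -/
theorem stmt_6 (d μ K L M : ℂ) (hd : d.im ≠ 0)
    (hbranch : ∀ r : ℝ, r ≤ 0 → 1 + d ≠ (r : ℂ)) (hμ : μ ≠ 0)
    (hμdef : μ⁻¹ = -1 - (1 + d) ^ ((1 : ℂ) / 2))
    (hK : K = -1 + d * (starRingEnd ℂ) d * μ / ((starRingEnd ℂ) d - d))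
    (hL : L = -(d * μ) / ((starRingEnd ℂ) d - d))
    (hM : M = μ / ((starRingEnd ℂ) d - d))
    (Q : ℝ → ℝ → ℂ)
    (hQ : ∀ x y : ℝ, Q x y =
      (K * (x : ℂ) ^ 2 + 2 * L * (x : ℂ) * (y : ℂ) + M * (y : ℂ) ^ 2) / 2) :
    ((0 < d.im → (μ⁻¹).im < 0) ∧ (d.im < 0 → 0 < (μ⁻¹).im)) ∧
    ∀ x y : ℝ, (Q x y).re ≤ 0 :=
  stmt_6_general d μ K L M hd hμdef hK hL hM Q hQ
end

section
/- Let D = ∂_x + d∂_y and D̄ = ∂_x + conj(d)∂_y, and let Q(x,y) = ½(Kx² + 2Lxy + My²) with K, L, M as in the mode conversion model (so that DQ = (1 + 1/μ)x, D̄Q = μy − x, DD̄Q = 1 + 1/μ). If F̃ is smooth and satisfies DD̄F̃ + (x/μ)D̄F̃ + μy·DF̃ = 0, then F = F̃·exp(Q) satisfies DD̄F + 2i·d_i·x·∂_y F − (1 + 1/μ + x(x+y))F = 0. -/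
open Complex

/-- Partial derivative in the first variable of a function of two real variables. -/
noncomputable def pdx (f : ℝ → ℝ → ℂ) (x y : ℝ) : ℂ := deriv (fun t => f t y) x

/-- Partial derivative in the second variable of a function of two real variables. -/
noncomputable def pdy (f : ℝ → ℝ → ℂ) (x y : ℝ) : ℂ := deriv (fun t => f x t) y

/-- The operator `D g = (∂_x + d∂_y) g`. -/
noncomputable def Dop (d : ℂ) (f : ℝ → ℝ → ℂ) : ℝ → ℝ → ℂ :=
  fun x y => pdx f x y + d * pdy f x y

/-!
Conjugation by `exp Q` shifts each directional derivative by the corresponding derivative of `Q`: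
`D(F̃ e^Q) = (DF̃ + F̃ DQ) e^Q`, hence
`DD̄F = (DD̄F̃ + D̄F̃ DQ + DF̃ D̄Q + F̃ (DD̄Q + DQ D̄Q)) e^Q`.
Writing `2i d_i ∂_y = D − D̄` and inserting `DQ = (1 + 1/μ)x`, `D̄Q = μy − x`, the
first-order terms recombine to `(x/μ)D̄F̃ + μy DF̃`, the zeroth-order terms cancel, and what
remains is `e^Q` times the equation satisfied by `F̃`.
-/

open Function

section PartialDerivatives

variable {f g : ℝ → ℝ → ℂ} {x y : ℝ}

theorem hasDerivAt_fderiv_uncurry_fst (hf : DifferentiableAt ℝ (uncurry f) (x, y)) :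
    HasDerivAt (fun t => f t y) (fderiv ℝ (uncurry f) (x, y) (1, 0)) x :=
  hf.hasFDerivAt.comp_hasDerivAt (f := fun t => (t, y)) x
    ((hasDerivAt_id x).prodMk (hasDerivAt_const x y))

theorem hasDerivAt_fderiv_uncurry_snd (hf : DifferentiableAt ℝ (uncurry f) (x, y)) :
    HasDerivAt (fun t => f x t) (fderiv ℝ (uncurry f) (x, y) (0, 1)) y :=
  hf.hasFDerivAt.comp_hasDerivAt (f := fun t => (x, t)) y
    ((hasDerivAt_const y x).prodMk (hasDerivAt_id y))

theorem hasDerivAt_pdx (hf : DifferentiableAt ℝ (uncurry f) (x, y)) :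
    HasDerivAt (fun t => f t y) (pdx f x y) x :=
  (hasDerivAt_fderiv_uncurry_fst hf).differentiableAt.hasDerivAt

theorem hasDerivAt_pdy (hf : DifferentiableAt ℝ (uncurry f) (x, y)) :
    HasDerivAt (fun t => f x t) (pdy f x y) y :=
  (hasDerivAt_fderiv_uncurry_snd hf).differentiableAt.hasDerivAt

theorem contDiff_uncurry_pdx {n : WithTop ℕ∞} (hf : ContDiff ℝ (n + 1) (uncurry f)) :
    ContDiff ℝ n (uncurry (pdx f)) := by
  have hdiff := hf.differentiable (by simp)
  have h : uncurry (pdx f) = fun p => fderiv ℝ (uncurry f) p (1, 0) := by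
    funext ⟨x, y⟩
    exact (hasDerivAt_fderiv_uncurry_fst (hdiff (x, y))).deriv
  rw [h]
  exact (hf.fderiv_right le_rfl).clm_apply contDiff_const

theorem contDiff_uncurry_pdy {n : WithTop ℕ∞} (hf : ContDiff ℝ (n + 1) (uncurry f)) :
    ContDiff ℝ n (uncurry (pdy f)) := by
  have hdiff := hf.differentiable (by simp)
  have h : uncurry (pdy f) = fun p => fderiv ℝ (uncurry f) p (0, 1) := by
    funext ⟨x, y⟩
    exact (hasDerivAt_fderiv_uncurry_snd (hdiff (x, y))).deriv
  rw [h]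
  exact (hf.fderiv_right le_rfl).clm_apply contDiff_const

theorem contDiff_uncurry_Dop {n : WithTop ℕ∞} (a : ℂ) (hf : ContDiff ℝ (n + 1) (uncurry f)) :
    ContDiff ℝ n (uncurry (Dop a f)) :=
  (contDiff_uncurry_pdx hf).add (contDiff_const.mul (contDiff_uncurry_pdy hf))

theorem pdx_add (hf : DifferentiableAt ℝ (uncurry f) (x, y))
    (hg : DifferentiableAt ℝ (uncurry g) (x, y)) :
    pdx (fun x y => f x y + g x y) x y = pdx f x y + pdx g x y :=
  ((hasDerivAt_pdx hf).add (hasDerivAt_pdx hg)).deriv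

theorem pdy_add (hf : DifferentiableAt ℝ (uncurry f) (x, y))
    (hg : DifferentiableAt ℝ (uncurry g) (x, y)) :
    pdy (fun x y => f x y + g x y) x y = pdy f x y + pdy g x y :=
  ((hasDerivAt_pdy hf).add (hasDerivAt_pdy hg)).deriv

theorem pdx_mul (hf : DifferentiableAt ℝ (uncurry f) (x, y))
    (hg : DifferentiableAt ℝ (uncurry g) (x, y)) :
    pdx (fun x y => f x y * g x y) x y = pdx f x y * g x y + f x y * pdx g x y :=
  ((hasDerivAt_pdx hf).mul (hasDerivAt_pdx hg)).deriv

theorem pdy_mul (hf : DifferentiableAt ℝ (uncurry f) (x, y))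
    (hg : DifferentiableAt ℝ (uncurry g) (x, y)) :
    pdy (fun x y => f x y * g x y) x y = pdy f x y * g x y + f x y * pdy g x y :=
  ((hasDerivAt_pdy hf).mul (hasDerivAt_pdy hg)).deriv

theorem pdx_cexp (hg : DifferentiableAt ℝ (uncurry g) (x, y)) :
    pdx (fun x y => exp (g x y)) x y = exp (g x y) * pdx g x y :=
  (hasDerivAt_pdx hg).cexp.deriv

theorem pdy_cexp (hg : DifferentiableAt ℝ (uncurry g) (x, y)) :
    pdy (fun x y => exp (g x y)) x y = exp (g x y) * pdy g x y :=
  (hasDerivAt_pdy hg).cexp.deriv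

theorem Dop_sub_Dop (a b : ℂ) (f : ℝ → ℝ → ℂ) (x y : ℝ) :
    Dop a f x y - Dop b f x y = (a - b) * pdy f x y := by
  simp only [Dop]
  ring

variable (a : ℂ)

theorem Dop_add (hf : DifferentiableAt ℝ (uncurry f) (x, y))
    (hg : DifferentiableAt ℝ (uncurry g) (x, y)) :
    Dop a (fun x y => f x y + g x y) x y = Dop a f x y + Dop a g x y := by
  simp only [Dop, pdx_add hf hg, pdy_add hf hg]
  ring

theorem Dop_mul (hf : DifferentiableAt ℝ (uncurry f) (x, y))
    (hg : DifferentiableAt ℝ (uncurry g) (x, y)) :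
    Dop a (fun x y => f x y * g x y) x y = Dop a f x y * g x y + f x y * Dop a g x y := by
  simp only [Dop, pdx_mul hf hg, pdy_mul hf hg]
  ring

theorem Dop_cexp (hg : DifferentiableAt ℝ (uncurry g) (x, y)) :
    Dop a (fun x y => exp (g x y)) x y = exp (g x y) * Dop a g x y := by
  simp only [Dop, pdx_cexp hg, pdy_cexp hg]
  ring

theorem Dop_mul_cexp (hf : Differentiable ℝ (uncurry f)) (hg : Differentiable ℝ (uncurry g)) :
    Dop a (fun x y => f x y * exp (g x y)) =
      fun x y => (Dop a f x y + f x y * Dop a g x y) * exp (g x y) := by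
  have hE : Differentiable ℝ (uncurry fun x y => exp (g x y)) := hg.cexp
  funext x y
  rw [Dop_mul a (hf (x, y)) (hE (x, y)), Dop_cexp a (hg (x, y))]
  ring

theorem Dop_Dop_mul_cexp (b : ℂ) (hf : ContDiff ℝ 2 (uncurry f))
    (hg : ContDiff ℝ 2 (uncurry g)) :
    Dop a (Dop b (fun x y => f x y * exp (g x y))) x y =
      (Dop a (Dop b f) x y + Dop b f x y * Dop a g x y + Dop a f x y * Dop b g x y
        + f x y * (Dop a (Dop b g) x y + Dop a g x y * Dop b g x y)) * exp (g x y) := by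
  have hf₁ : Differentiable ℝ (uncurry f) := hf.differentiable two_ne_zero
  have hg₁ : Differentiable ℝ (uncurry g) := hg.differentiable two_ne_zero
  have hDf : Differentiable ℝ (uncurry (Dop b f)) :=
    (contDiff_uncurry_Dop (n := 1) b hf).differentiable one_ne_zero
  have hDg : Differentiable ℝ (uncurry (Dop b g)) :=
    (contDiff_uncurry_Dop (n := 1) b hg).differentiable one_ne_zero
  have hE : Differentiable ℝ (uncurry fun x y => exp (g x y)) := hg₁.cexp
  have hfDg : Differentiable ℝ (uncurry fun x y => f x y * Dop b g x y) := hf₁.mul hDg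
  have hDfg : Differentiable ℝ (uncurry fun x y => Dop b f x y + f x y * Dop b g x y) :=
    hDf.add hfDg
  rw [Dop_mul_cexp b hf₁ hg₁, Dop_mul a (hDfg (x, y)) (hE (x, y)), Dop_cexp a (hg₁ (x, y)),
    Dop_add a (hDf (x, y)) (hfDg (x, y)), Dop_mul a (hf₁ (x, y)) (hDg (x, y))]
  ring

end PartialDerivatives

section QuadraticForm

variable (K L M : ℂ)

noncomputable def quadForm (x y : ℝ) : ℂ :=
  (K * (x : ℂ) ^ 2 + 2 * L * (x : ℂ) * (y : ℂ) + M * (y : ℂ) ^ 2) / 2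

theorem contDiff_uncurry_quadForm {n : WithTop ℕ∞} : ContDiff ℝ n (uncurry (quadForm K L M)) := by
  have h : ContDiff ℝ n fun t : ℝ => (t : ℂ) := ofRealCLM.contDiff
  unfold quadForm uncurry
  fun_prop

theorem pdx_quadForm (x y : ℝ) : pdx (quadForm K L M) x y = K * x + L * y :=
  ((((((hasDerivAt_pow 2 (x : ℂ)).const_mul K).add
    (((hasDerivAt_id' (x : ℂ)).const_mul (2 * L)).mul_const (y : ℂ))).add_const
    (M * (y : ℂ) ^ 2)).div_const 2).comp_ofReal.deriv).trans (by ring)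

theorem pdy_quadForm (x y : ℝ) : pdy (quadForm K L M) x y = L * x + M * y :=
  (((((hasDerivAt_id' (y : ℂ)).const_mul (2 * L * x)).const_add (K * (x : ℂ) ^ 2)).add
    ((hasDerivAt_pow 2 (y : ℂ)).const_mul M)).div_const 2).comp_ofReal.deriv.trans (by ring)

theorem Dop_quadForm (a : ℂ) :
    Dop a (quadForm K L M) = fun x y : ℝ => (K + a * L) * (x : ℂ) + (L + a * M) * (y : ℂ) := by
  funext x y
  simp only [Dop, pdx_quadForm, pdy_quadForm]
  ring

end QuadraticForm

theorem Dop_linear (a α β : ℂ) (x y : ℝ) :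
    Dop a (fun x y => α * (x : ℂ) + β * (y : ℂ)) x y = α + a * β := by
  have hx : HasDerivAt (fun t : ℝ => α * (t : ℂ) + β * y) α x := by
    simpa using ((hasDerivAt_id' (x : ℂ)).const_mul α).add_const (β * y) |>.comp_ofReal
  have hy : HasDerivAt (fun t : ℝ => α * (x : ℂ) + β * t) β y := by
    simpa using ((hasDerivAt_id' (y : ℂ)).const_mul β).const_add (α * x) |>.comp_ofReal
  simp only [Dop, pdx, pdy, hx.deriv, hy.deriv]

open ComplexConjugate in
theorem modeConversion_coeffs {d μ K L M : ℂ} (hd : d.im ≠ 0)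
    (hK : K = -1 + d * conj d * μ / (conj d - d)) (hL : L = -(d * μ) / (conj d - d))
    (hM : M = μ / (conj d - d)) :
    K + d * L = d * μ - 1 ∧ L + d * M = 0 ∧ K + conj d * L = -1 ∧ L + conj d * M = μ := by
  have hcd : conj d - d ≠ 0 := fun h => hd (conj_eq_iff_im.mp (sub_eq_zero.mp h))
  subst hK hL hM
  refine ⟨?_, ?_, ?_, ?_⟩ <;> field_simp <;> ring

theorem stmt_9_general (d μ K L M : ℂ) (hd : d.im ≠ 0)
    (hdμ : d * μ = 2 + μ⁻¹)
    (hK : K = -1 + d * (starRingEnd ℂ) d * μ / ((starRingEnd ℂ) d - d))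
    (hL : L = -(d * μ) / ((starRingEnd ℂ) d - d))
    (hM : M = μ / ((starRingEnd ℂ) d - d))
    (Q : ℝ → ℝ → ℂ)
    (hQ : ∀ x y : ℝ, Q x y =
      (K * (x : ℂ) ^ 2 + 2 * L * (x : ℂ) * (y : ℂ) + M * (y : ℂ) ^ 2) / 2)
    (Ft : ℝ → ℝ → ℂ) (hFt : ContDiff ℝ 2 (fun p : ℝ × ℝ => Ft p.1 p.2))
    (heq : ∀ x y : ℝ,
      Dop d (Dop ((starRingEnd ℂ) d) Ft) x y
        + ((x : ℂ) / μ) * Dop ((starRingEnd ℂ) d) Ft x y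
        + μ * (y : ℂ) * Dop d Ft x y = 0)
    (F : ℝ → ℝ → ℂ) (hF : ∀ x y : ℝ, F x y = Ft x y * Complex.exp (Q x y)) :
    ∀ x y : ℝ,
      Dop d (Dop ((starRingEnd ℂ) d) F) x y
        + 2 * I * (d.im : ℂ) * (x : ℂ) * pdy F x y
        - (1 + μ⁻¹ + (x : ℂ) * ((x : ℂ) + (y : ℂ))) * F x y = 0 := by
  have hμμ : μ * μ⁻¹ = 1 := mul_inv_cancel₀ (by rintro rfl; norm_num at hdμ)
  obtain ⟨hKd, hLd, hKc, hLc⟩ := modeConversion_coeffs hd hK hL hM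
  set c := (starRingEnd ℂ) d
  obtain rfl : Q = quadForm K L M := funext₂ hQ
  obtain rfl : F = fun x y => Ft x y * exp (quadForm K L M x y) := funext₂ hF
  have hQ₂ : ContDiff ℝ 2 (uncurry (quadForm K L M)) := contDiff_uncurry_quadForm K L M
  have hFt₁ : Differentiable ℝ (uncurry Ft) := hFt.differentiable two_ne_zero
  have hQ₁ : Differentiable ℝ (uncurry (quadForm K L M)) := hQ₂.differentiable two_ne_zero
  intro x y
  have hdc : 2 * I * (d.im : ℂ) = d - c := by
    rw [sub_conj]
    push_cast
    ring
  rw [Dop_Dop_mul_cexp d c hFt hQ₂, mul_right_comm _ (x : ℂ), hdc, ← Dop_sub_Dop,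
    Dop_mul_cexp d hFt₁ hQ₁, Dop_mul_cexp c hFt₁ hQ₁, Dop_quadForm, Dop_quadForm, Dop_linear,
    hKd, hLd, hKc, hLc]
  linear_combination exp (quadForm K L M x y) * (heq x y
    + ((x : ℂ) * Dop c Ft x y + Ft x y * (1 + μ * x * y)) * hdμ + Ft x y * x * y * hμμ)

/-- If `F̃` satisfies `DD̄F̃ + (x/μ)D̄F̃ + μy DF̃ = 0`, with `D = ∂_x + d∂_y`,
`D̄ = ∂_x + conj(d)∂_y` and `Q` the mode conversion quadratic form, then
`F = F̃ exp(Q)` satisfies `DD̄F + 2i d_i x ∂_y F − (1 + 1/μ + x(x+y))F = 0`. -/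
theorem stmt_9 (d μ K L M : ℂ) (hd : d.im ≠ 0) (hμ : μ ≠ 0)
    (hdμ : d * μ = 2 + μ⁻¹)
    (hK : K = -1 + d * (starRingEnd ℂ) d * μ / ((starRingEnd ℂ) d - d))
    (hL : L = -(d * μ) / ((starRingEnd ℂ) d - d))
    (hM : M = μ / ((starRingEnd ℂ) d - d))
    (Q : ℝ → ℝ → ℂ)
    (hQ : ∀ x y : ℝ, Q x y =
      (K * (x : ℂ) ^ 2 + 2 * L * (x : ℂ) * (y : ℂ) + M * (y : ℂ) ^ 2) / 2)
    (Ft : ℝ → ℝ → ℂ) (hFt : ContDiff ℝ 2 (fun p : ℝ × ℝ => Ft p.1 p.2))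
    (heq : ∀ x y : ℝ,
      Dop d (Dop ((starRingEnd ℂ) d) Ft) x y
        + ((x : ℂ) / μ) * Dop ((starRingEnd ℂ) d) Ft x y
        + μ * (y : ℂ) * Dop d Ft x y = 0)
    (F : ℝ → ℝ → ℂ) (hF : ∀ x y : ℝ, F x y = Ft x y * Complex.exp (Q x y)) :
    ∀ x y : ℝ,
      Dop d (Dop ((starRingEnd ℂ) d) F) x y
        + 2 * I * (d.im : ℂ) * (x : ℂ) * pdy F x y
        - (1 + μ⁻¹ + (x : ℂ) * ((x : ℂ) + (y : ℂ))) * F x y = 0 :=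
  stmt_9_general d μ K L M hd hdμ hK hL hM Q hQ Ft hFt heq F hF
end

section
/- With D = ∂_x + d∂_y, D̄ = ∂_x + conj(d)∂_y, and K, L, M as in the mode conversion model, the quadratic form Q(x,y) = ½(Kx² + 2Lxy + My²) satisfies DQ = (1 + 1/μ)x, D̄Q = μy − x, and DD̄Q = dμ − 1 = 1 + 1/μ. -/
/-!
The operator `∂_x + c∂_y` sends `½(Kx² + 2Lxy + My²)` to the linear form
`(K + cL)x + (L + cM)y`, and a linear form `αx + βy` to the constant `α + cβ`. The values of
`K, L, M` make these coefficients `dμ - 1, 0` for `c = d` and `-1, μ` for `c = conj d`.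
-/

open Complex

lemma deriv_ofReal_quadratic (a b c : ℂ) (x : ℝ) :
    deriv (fun t : ℝ => a * (t : ℂ) ^ 2 + b * t + c) x = 2 * a * x + b := by
  have h : HasDerivAt (fun z : ℂ => a * z ^ 2 + b * z + c) (2 * a * x + b) x :=
    ((((hasDerivAt_pow 2 (x : ℂ)).const_mul a).add
      ((hasDerivAt_id' (x : ℂ)).const_mul b)).add_const c).congr_deriv (by push_cast; ring)
  exact h.comp_ofReal.deriv

section DirectionalDerivative

variable (c : ℂ) {K L M α β : ℂ} {Q : ℝ → ℝ → ℂ} (x y : ℝ)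

lemma pdx_add_mul_pdy_of_quadratic
    (hQ : ∀ a b : ℝ, Q a b = (K * (a : ℂ) ^ 2 + 2 * L * a * b + M * (b : ℂ) ^ 2) / 2) :
    pdx Q x y + c * pdy Q x y = (K + c * L) * x + (L + c * M) * y := by
  have hx : (fun t : ℝ => Q t y)
      = fun t : ℝ => K / 2 * (t : ℂ) ^ 2 + L * y * t + M * (y : ℂ) ^ 2 / 2 := by
    funext t; rw [hQ]; ring
  have hy : (fun t : ℝ => Q x t)
      = fun t : ℝ => M / 2 * (t : ℂ) ^ 2 + L * x * t + K * (x : ℂ) ^ 2 / 2 := by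
    funext t; rw [hQ]; ring
  rw [pdx, pdy, hx, hy, deriv_ofReal_quadratic, deriv_ofReal_quadratic]
  ring

lemma pdx_add_mul_pdy_of_linear (hQ : ∀ a b : ℝ, Q a b = α * a + β * b) :
    pdx Q x y + c * pdy Q x y = α + c * β := by
  have hx : (fun t : ℝ => Q t y) = fun t : ℝ => 0 * (t : ℂ) ^ 2 + α * t + β * y := by
    funext t; rw [hQ]; ring
  have hy : (fun t : ℝ => Q x t) = fun t : ℝ => 0 * (t : ℂ) ^ 2 + β * t + α * x := by
    funext t; rw [hQ]; ring
  rw [pdx, pdy, hx, hy, deriv_ofReal_quadratic, deriv_ofReal_quadratic]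
  ring

end DirectionalDerivative

section ModeConversion

variable {d μ K L M : ℂ}

lemma conj_sub_self_ne_zero (hd : d.im ≠ 0) : starRingEnd ℂ d - d ≠ 0 :=
  sub_ne_zero.mpr fun h => hd (conj_eq_iff_im.mp h)

lemma add_mul_L_eq (hd : d.im ≠ 0)
    (hK : K = -1 + d * starRingEnd ℂ d * μ / (starRingEnd ℂ d - d))
    (hL : L = -(d * μ) / (starRingEnd ℂ d - d)) :
    K + d * L = d * μ - 1 := by
  have := conj_sub_self_ne_zero hd
  rw [hK, hL]
  field_simp
  ring

lemma add_conj_mul_L_eq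
    (hK : K = -1 + d * starRingEnd ℂ d * μ / (starRingEnd ℂ d - d))
    (hL : L = -(d * μ) / (starRingEnd ℂ d - d)) :
    K + starRingEnd ℂ d * L = -1 := by
  rw [hK, hL]
  ring

lemma L_add_mul_M_eq (hL : L = -(d * μ) / (starRingEnd ℂ d - d))
    (hM : M = μ / (starRingEnd ℂ d - d)) :
    L + d * M = 0 := by
  rw [hL, hM]
  ring

lemma L_add_conj_mul_M_eq (hd : d.im ≠ 0) (hL : L = -(d * μ) / (starRingEnd ℂ d - d))
    (hM : M = μ / (starRingEnd ℂ d - d)) :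
    L + starRingEnd ℂ d * M = μ := by
  have := conj_sub_self_ne_zero hd
  rw [hL, hM]
  field_simp
  ring

end ModeConversion

theorem stmt_10_general (d μ K L M : ℂ) (hd : d.im ≠ 0)
    (hdμ : d * μ = 2 + μ⁻¹)
    (hK : K = -1 + d * (starRingEnd ℂ) d * μ / ((starRingEnd ℂ) d - d))
    (hL : L = -(d * μ) / ((starRingEnd ℂ) d - d))
    (hM : M = μ / ((starRingEnd ℂ) d - d))
    (Q : ℝ → ℝ → ℂ)
    (hQ : ∀ x y : ℝ, Q x y =
      (K * (x : ℂ) ^ 2 + 2 * L * (x : ℂ) * (y : ℂ) + M * (y : ℂ) ^ 2) / 2) :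
    (∀ x y : ℝ, pdx Q x y + d * pdy Q x y = (1 + μ⁻¹) * (x : ℂ)) ∧
    (∀ x y : ℝ, pdx Q x y + (starRingEnd ℂ) d * pdy Q x y = μ * (y : ℂ) - (x : ℂ)) ∧
    (∀ x y : ℝ,
      pdx (fun a b => pdx Q a b + (starRingEnd ℂ) d * pdy Q a b) x y
        + d * pdy (fun a b => pdx Q a b + (starRingEnd ℂ) d * pdy Q a b) x y
      = d * μ - 1 ∧ d * μ - 1 = 1 + μ⁻¹) := by
  have hDbarQ (x y : ℝ) : pdx Q x y + starRingEnd ℂ d * pdy Q x y = -1 * (x : ℂ) + μ * y := by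
    rw [pdx_add_mul_pdy_of_quadratic _ _ _ hQ, add_conj_mul_L_eq hK hL,
      L_add_conj_mul_M_eq hd hL hM]
  have hdμ' : d * μ - 1 = 1 + μ⁻¹ := by rw [hdμ]; ring
  refine ⟨fun x y => ?_, fun x y => by rw [hDbarQ]; ring, fun x y => ⟨?_, hdμ'⟩⟩
  · rw [pdx_add_mul_pdy_of_quadratic _ _ _ hQ, add_mul_L_eq hd hK hL, L_add_mul_M_eq hL hM, hdμ']
    ring
  · rw [pdx_add_mul_pdy_of_linear _ _ _ hDbarQ]
    ring

/-- With `D = ∂_x + d∂_y`, `D̄ = ∂_x + conj(d)∂_y` and `K, L, M` as in the mode conversion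
model, the quadratic form `Q(x,y) = ½(Kx² + 2Lxy + My²)` satisfies `DQ = (1 + 1/μ)x`,
`D̄Q = μy − x`, and `DD̄Q = dμ − 1 = 1 + 1/μ`. -/
theorem stmt_10 (d μ K L M : ℂ) (hd : d.im ≠ 0) (hμ : μ ≠ 0)
    (hdμ : d * μ = 2 + μ⁻¹)
    (hK : K = -1 + d * (starRingEnd ℂ) d * μ / ((starRingEnd ℂ) d - d))
    (hL : L = -(d * μ) / ((starRingEnd ℂ) d - d))
    (hM : M = μ / ((starRingEnd ℂ) d - d))
    (Q : ℝ → ℝ → ℂ)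
    (hQ : ∀ x y : ℝ, Q x y =
      (K * (x : ℂ) ^ 2 + 2 * L * (x : ℂ) * (y : ℂ) + M * (y : ℂ) ^ 2) / 2) :
    (∀ x y : ℝ, pdx Q x y + d * pdy Q x y = (1 + μ⁻¹) * (x : ℂ)) ∧
    (∀ x y : ℝ, pdx Q x y + (starRingEnd ℂ) d * pdy Q x y = μ * (y : ℂ) - (x : ℂ)) ∧
    (∀ x y : ℝ,
      pdx (fun a b => pdx Q a b + (starRingEnd ℂ) d * pdy Q a b) x y
        + d * pdy (fun a b => pdx Q a b + (starRingEnd ℂ) d * pdy Q a b) x y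
      = d * μ - 1 ∧ d * μ - 1 = 1 + μ⁻¹) :=
  stmt_10_general d μ K L M hd hdμ hK hL hM Q hQ
end

section
/- Let Ω ⊂ ℝ² be a bounded Lipschitz domain, d_i < 0, σ > 0, and c(x,y) = 1 + 1/μ + x(x+y) with 1/μ = −1 − √(1+d). If u ∈ H¹(Ω) satisfies the homogeneous weak formulation ∫_Ω A∇u·∇v̄ − i·d_i∫_Ω x(∂_y u·v̄ − u·∂_y v̄) + ∫_Ω c·u·v̄ + iσ∫_{∂Ω} u·v̄ = 0 for all v ∈ H¹(Ω), then u = 0. -/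
open Complex MeasureTheory

/-- First component of the gradient. -/
noncomputable def gradx (u : ℝ × ℝ → ℂ) (p : ℝ × ℝ) : ℂ := fderiv ℝ u p (1, 0)

/-- Second component of the gradient. -/
noncomputable def grady (u : ℝ × ℝ → ℂ) (p : ℝ × ℝ) : ℂ := fderiv ℝ u p (0, 1)

/-- The sesquilinear form of the weak formulation
`∫_Ω A∇u·∇v̄ − i d_i ∫_Ω x(∂_y u v̄ − u ∂_y v̄) + ∫_Ω c u v̄ + iσ∫_{∂Ω} u v̄`,
with `A = [[1, d_r],[d_r, |d|²]]`, variable coefficient `c`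
and boundary measure `μB`. -/
noncomputable def weakForm (d : ℂ) (σ : ℝ) (c : ℝ × ℝ → ℂ) (Ω : Set (ℝ × ℝ))
    (μB : Measure (ℝ × ℝ)) (u v : ℝ × ℝ → ℂ) : ℂ :=
  (∫ p in Ω, (gradx u p * (starRingEnd ℂ) (gradx v p)
      + (d.re : ℂ) * (gradx u p * (starRingEnd ℂ) (grady v p)
          + grady u p * (starRingEnd ℂ) (gradx v p))
      + (Complex.normSq d : ℂ) * grady u p * (starRingEnd ℂ) (grady v p)))
  - I * (d.im : ℂ) * (∫ p in Ω, (p.1 : ℂ) *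
      (grady u p * (starRingEnd ℂ) (v p) - u p * (starRingEnd ℂ) (grady v p)))
  + (∫ p in Ω, c p * (u p * (starRingEnd ℂ) (v p)))
  + I * (σ : ℂ) * (∫ p, u p * (starRingEnd ℂ) (v p) ∂μB)

/-- The coercion `ℝ → ℂ` commutes with the Bochner integral (unconditionally). -/
theorem myIntOfReal (μ : Measure (ℝ × ℝ)) (f : ℝ × ℝ → ℝ) :
    (∫ p, ((f p : ℝ) : ℂ) ∂μ) = ((∫ p, f p ∂μ : ℝ) : ℂ) :=
  Complex.ofRealLI.integral_comp_comm (μ := μ) f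

/-- Uniqueness for the mode conversion weak formulation: if `d_i < 0`, `σ > 0`,
`c(x,y) = 1 + 1/μ + x(x+y)` with `1/μ = −1 − √(1+d)` (principal branch), and `u`
satisfies the homogeneous weak formulation against all test functions, then `u = 0`. -/
theorem stmt_14 (d : ℂ) (hd : d.im < 0)
    (hbranch : ∀ r : ℝ, r ≤ 0 → 1 + d ≠ (r : ℂ))
    (σ : ℝ) (hσ : 0 < σ)
    (Ω : Set (ℝ × ℝ)) (hΩo : IsOpen Ω) (hΩb : Bornology.IsBounded Ω)
    (hΩ0 : (0, 0) ∈ Ω)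
    (μB : Measure (ℝ × ℝ)) [IsFiniteMeasure μB] (hμB : μB (frontier Ω)ᶜ = 0)
    (c : ℝ × ℝ → ℂ)
    (hc : ∀ p : ℝ × ℝ, c p = 1 + (-1 - (1 + d) ^ ((1 : ℂ) / 2))
        + (p.1 : ℂ) * ((p.1 : ℂ) + (p.2 : ℂ)))
    (u : ℝ × ℝ → ℂ) (hu : ContDiff ℝ 1 u)
    (hweak : ∀ v : ℝ × ℝ → ℂ, ContDiff ℝ 1 v → weakForm d σ c Ω μB u v = 0) :
    ∀ p ∈ Ω, u p = 0 := by
  set w := (1 + d) ^ ((1 : ℂ) / 2) with hw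
  -- the imaginary part of the principal square root is negative
  have hwim : w.im < 0 := by
    have hz : (1 + d) ≠ 0 := by
      intro h
      have : (1 + d).im = 0 := by rw [h]; simp
      simp at this; linarith
    rw [hw, Complex.cpow_def_of_ne_zero hz, Complex.exp_im]
    have harg : Complex.arg (1 + d) < 0 := Complex.arg_neg_iff.2 (by simp; linarith)
    have harg2 : -Real.pi < Complex.arg (1 + d) := Complex.neg_pi_lt_arg _
    have him : (Complex.log (1 + d) * ((1:ℂ)/2)).im = Complex.arg (1 + d) / 2 := by
      simp [Complex.mul_im, Complex.log_im]; ring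
    rw [him]
    have hs : Real.sin (Complex.arg (1 + d) / 2) < 0 :=
      Real.sin_neg_of_neg_of_neg_pi_lt (by linarith) (by linarith)
    have := Real.exp_pos ((Complex.log (1 + d) * ((1:ℂ)/2)).re)
    nlinarith
  have hucont : Continuous u := hu.continuous
  have hnsq : Continuous fun p : ℝ × ℝ => Complex.normSq (u p) :=
    Complex.continuous_normSq.comp hucont
  have hccont : Continuous c := by
    have hceq : c = fun p : ℝ × ℝ => 1 + (-1 - w) + (p.1:ℂ) * ((p.1:ℂ) + (p.2:ℂ)) :=
      funext hc
    rw [hceq]; fun_prop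
  have hIOc : ∀ f : ℝ × ℝ → ℂ, Continuous f → IntegrableOn f Ω := fun f hf =>
    (hf.continuousOn.integrableOn_compact hΩb.isCompact_closure).mono_set subset_closure
  have hIOr : ∀ f : ℝ × ℝ → ℝ, Continuous f → IntegrableOn f Ω := fun f hf =>
    (hf.continuousOn.integrableOn_compact hΩb.isCompact_closure).mono_set subset_closure
  have hE := hweak u hu
  rw [weakForm] at hE
  set T1 : ℂ := ∫ p in Ω, (gradx u p * (starRingEnd ℂ) (gradx u p)
      + (d.re : ℂ) * (gradx u p * (starRingEnd ℂ) (grady u p)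
          + grady u p * (starRingEnd ℂ) (gradx u p))
      + (Complex.normSq d : ℂ) * grady u p * (starRingEnd ℂ) (grady u p)) with hT1
  set T2 : ℂ := ∫ p in Ω, (p.1 : ℂ) *
      (grady u p * (starRingEnd ℂ) (u p) - u p * (starRingEnd ℂ) (grady u p)) with hT2
  set T3 : ℂ := ∫ p in Ω, c p * (u p * (starRingEnd ℂ) (u p)) with hT3
  set T4 : ℂ := ∫ p, u p * (starRingEnd ℂ) (u p) ∂μB with hT4
  -- T1 is real
  have h1 : T1.im = 0 := by
    rw [← Complex.conj_eq_iff_im, hT1, ← integral_conj]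
    refine integral_congr_ae (Filter.Eventually.of_forall fun p => ?_)
    simp only [map_add, map_mul, Complex.conj_conj, Complex.conj_ofReal]
    ring
  -- T2 is purely imaginary
  have h2 : T2.re = 0 := by
    have hconj : (starRingEnd ℂ) T2 = -T2 := by
      rw [hT2, ← integral_conj, ← integral_neg]
      refine integral_congr_ae (Filter.Eventually.of_forall fun p => ?_)
      simp only [map_mul, map_sub, Complex.conj_conj, Complex.conj_ofReal]
      ring
    have hadd := Complex.add_conj T2
    rw [hconj] at hadd
    have h0 : ((2 * T2.re : ℝ) : ℂ) = 0 := by rw [← hadd]; ring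
    have := Complex.ofReal_eq_zero.mp h0
    linarith
  -- T4 is real and nonnegative
  set r4 : ℝ := ∫ p, Complex.normSq (u p) ∂μB with hr4
  have h4 : T4 = (r4 : ℂ) := by
    rw [hT4, hr4, ← myIntOfReal]
    exact integral_congr_ae (Filter.Eventually.of_forall fun p => by
      simp [Complex.mul_conj])
  have hr4nn : 0 ≤ r4 := integral_nonneg fun p => Complex.normSq_nonneg _
  -- the imaginary part of T3
  set R : ℝ := ∫ p in Ω, Complex.normSq (u p) with hR
  have hRnn : 0 ≤ R := integral_nonneg fun p => Complex.normSq_nonneg _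
  have h3 : T3.im = -w.im * R := by
    set f1 : ℝ × ℝ → ℂ := fun p => (((c p).re * Complex.normSq (u p) : ℝ) : ℂ) with hf1
    set f2 : ℝ × ℝ → ℂ := fun p => (((-w.im) * Complex.normSq (u p) : ℝ) : ℂ) with hf2
    have hsplit : ∀ p : ℝ × ℝ, c p * (u p * (starRingEnd ℂ) (u p)) = f1 p + f2 p * I := by
      intro p
      have hci : (c p).im = -w.im := by rw [hc p]; simp
      rw [Complex.mul_conj, hf1, hf2]
      conv_lhs => rw [← Complex.re_add_im (c p)]
      rw [hci]; push_cast; ring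
    have hc1 : Continuous f1 :=
      Complex.continuous_ofReal.comp ((Complex.continuous_re.comp hccont).mul hnsq)
    have hc2 : Continuous f2 :=
      Complex.continuous_ofReal.comp (continuous_const.mul hnsq)
    have hi1 : IntegrableOn f1 Ω := hIOc f1 hc1
    have hi2 : IntegrableOn (fun p => f2 p * I) Ω := (hIOc f2 hc2).mul_const I
    have hT3' : T3 = (∫ p in Ω, f1 p) + (∫ p in Ω, f2 p * I) := by
      rw [hT3, ← integral_add hi1 hi2]
      exact integral_congr_ae (Filter.Eventually.of_forall fun p => hsplit p)
    have hint2 : (∫ p in Ω, f2 p * I) = (∫ p in Ω, f2 p) * I := integral_mul_const I f2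
    have hof1 : (∫ p in Ω, f1 p) = ((∫ p in Ω, (c p).re * Complex.normSq (u p) : ℝ) : ℂ) :=
      myIntOfReal _ _
    have hof2 : (∫ p in Ω, f2 p) = ((∫ p in Ω, (-w.im) * Complex.normSq (u p) : ℝ) : ℂ) :=
      myIntOfReal _ _
    have hmul : (∫ p in Ω, (-w.im) * Complex.normSq (u p)) = -w.im * R := by
      rw [hR, ← integral_const_mul]
    rw [hT3', hint2, hof1, hof2, hmul]
    simp
  -- take imaginary parts of the weak formulation
  have him := congrArg Complex.im hE
  simp only [Complex.add_im, Complex.sub_im, Complex.mul_im, Complex.mul_re,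
    Complex.I_re, Complex.I_im, Complex.ofReal_re, Complex.ofReal_im, Complex.zero_im,
    h1, h2, h3, h4] at him
  have hkey : -w.im * R + σ * r4 = 0 := by
    simp at him; linarith
  have hR0 : R = 0 := by nlinarith
  -- conclude that `u` vanishes on `Ω`
  have hInt : IntegrableOn (fun p : ℝ × ℝ => Complex.normSq (u p)) Ω := hIOr _ hnsq
  have hae : (fun p : ℝ × ℝ => Complex.normSq (u p)) =ᵐ[Measure.restrict volume Ω] 0 := by
    rw [← integral_eq_zero_iff_of_nonneg (fun p => Complex.normSq_nonneg _) hInt]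
    exact hR0
  have heq : Set.EqOn (fun p : ℝ × ℝ => Complex.normSq (u p)) 0 Ω := by
    refine Measure.eqOn_of_ae_eq hae hnsq.continuousOn continuousOn_const ?_
    rw [hΩo.interior_eq]; exact subset_closure
  intro p hp
  exact Complex.normSq_eq_zero.mp (by simpa using heq hp)
end
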